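/- arXiv:2206.12183 — 4 statements merged into one kernel-verified Lean document; each statement's English description precedes it below -/
import Mathlib

section
/- Let a = e^{ε₁}/(e^{ε₁}+1) and b = e^{ε₂}/(e^{ε₂}+1), ε₁, ε₂ ≥ 0. For the mechanism M_R on binary groups, for any output y = (g', v') with g' = g₁ ≠ g₀: Pr[y | (g₀, v₀)] / Pr[y | (g₁, v₁)] ≤ (1+e^{ε₂})/(2e^{ε₁}) ≤ e^{ε₂ - ε₁}. -/
open Real

/-!
With `a = σ ε₁` and `b = σ ε₂` for the logistic sigmoid `σ`, the denominator
`a (1 + (2b - 1) v' v₁) / 2` is smallest when `v' v₁ = -1`, where it equals `a (1 - b)`.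
Since `1 - σ x = e^{-x} σ x` and `1 - σ y = 1 / (1 + e^y)`, the resulting worst-case ratio
`(1 - a) / (2 a (1 - b))` is exactly `(1 + e^{ε₂}) / (2 e^{ε₁})`, and `1 ≤ e^{ε₂}` bounds this by
`e^{ε₂ - ε₁}`.
-/

namespace Real

lemma exp_div_exp_add_one (x : ℝ) : exp x / (exp x + 1) = sigmoid x := by
  rw [sigmoid_def, exp_neg]
  field_simp

lemma inv_two_le_sigmoid {x : ℝ} (hx : 0 ≤ x) : 2⁻¹ ≤ sigmoid x :=
  sigmoid_zero ▸ sigmoid_le hx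

lemma one_sub_sigmoid_div_sigmoid_mul (x y : ℝ) :
    (1 - sigmoid x) / (sigmoid x * (2 * (1 - sigmoid y))) = (1 + exp y) / (2 * exp x) := by
  rw [← sigmoid_neg, ← sigmoid_neg, ← sigmoid_mul_rexp_neg, sigmoid_def (-y), neg_neg, exp_neg]
  have := sigmoid_pos x
  field_simp

lemma one_add_exp_div_two_mul_exp_le_exp_sub (x : ℝ) {y : ℝ} (hy : 0 ≤ y) :
    (1 + exp y) / (2 * exp x) ≤ exp (y - x) := by
  rw [exp_sub, div_le_div_iff₀ (by positivity) (exp_pos x)]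
  nlinarith [one_le_exp hy, exp_pos x]

end Real

lemma neg_one_le_mul_of_mem_Icc {u v : ℝ} (hu : u ∈ Set.Icc (-1 : ℝ) 1)
    (hv : v ∈ Set.Icc (-1 : ℝ) 1) : -1 ≤ u * v := by
  obtain ⟨hu₀, hu₁⟩ := hu
  obtain ⟨hv₀, hv₁⟩ := hv
  nlinarith

lemma two_mul_one_sub_le_one_add_mul {b w : ℝ} (hb : 2⁻¹ ≤ b) (hw : -1 ≤ w) :
    2 * (1 - b) ≤ 1 + (2 * b - 1) * w := by
  nlinarith

theorem mR_case_flip_general (ε₁ ε₂ : ℝ) (hε₂ : 0 ≤ ε₂)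
    (a b : ℝ) (ha : a = Real.exp ε₁ / (Real.exp ε₁ + 1))
    (hb : b = Real.exp ε₂ / (Real.exp ε₂ + 1))
    (v₁ : ℝ) (hv₁ : v₁ ∈ Set.Icc (-1 : ℝ) 1)
    (v' : ℝ) (hv' : v' = -1 ∨ v' = 1) :
    ((1 - a) / 2) / (a * (1 + (2 * b - 1) * v' * v₁) / 2)
      ≤ (1 + Real.exp ε₂) / (2 * Real.exp ε₁) ∧
    (1 + Real.exp ε₂) / (2 * Real.exp ε₁) ≤ Real.exp (ε₂ - ε₁) := by
  rw [exp_div_exp_add_one] at ha hb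
  subst ha hb
  have hv'_mem : v' ∈ Set.Icc (-1 : ℝ) 1 := by rcases hv' with rfl | rfl <;> norm_num
  have hden := two_mul_one_sub_le_one_add_mul (inv_two_le_sigmoid hε₂)
    (neg_one_le_mul_of_mem_Icc hv'_mem hv₁)
  have hworst : 0 < sigmoid ε₁ * (2 * (1 - sigmoid ε₂)) :=
    mul_pos (sigmoid_pos ε₁) (by linarith [sigmoid_lt_one ε₂])
  refine ⟨?_, one_add_exp_div_two_mul_exp_le_exp_sub ε₁ hε₂⟩
  calc (1 - sigmoid ε₁) / 2 / (sigmoid ε₁ * (1 + (2 * sigmoid ε₂ - 1) * v' * v₁) / 2)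
      = (1 - sigmoid ε₁) / (sigmoid ε₁ * (1 + (2 * sigmoid ε₂ - 1) * (v' * v₁))) := by
        rw [div_div_div_cancel_right₀ two_ne_zero, mul_assoc (2 * sigmoid ε₂ - 1)]
    _ ≤ (1 - sigmoid ε₁) / (sigmoid ε₁ * (2 * (1 - sigmoid ε₂))) := by
        gcongr
        · exact sub_nonneg.2 (sigmoid_le_one ε₁)
        · exact sigmoid_nonneg ε₁
    _ = (1 + exp ε₂) / (2 * exp ε₁) := one_sub_sigmoid_div_sigmoid_mul ε₁ ε₂

/-- Case `g' = g₁ ≠ g₀` in the LDP proof of `M_R`: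
the probability ratio is at most `(1+e^{ε₂})/(2 e^{ε₁}) ≤ e^{ε₂-ε₁}`. -/
theorem mR_case_flip (ε₁ ε₂ : ℝ) (hε₁ : 0 ≤ ε₁) (hε₂ : 0 ≤ ε₂)
    (a b : ℝ) (ha : a = Real.exp ε₁ / (Real.exp ε₁ + 1))
    (hb : b = Real.exp ε₂ / (Real.exp ε₂ + 1))
    (v₀ v₁ : ℝ) (hv₀ : v₀ ∈ Set.Icc (-1 : ℝ) 1) (hv₁ : v₁ ∈ Set.Icc (-1 : ℝ) 1)
    (v' : ℝ) (hv' : v' = -1 ∨ v' = 1) :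
    ((1 - a) / 2) / (a * (1 + (2 * b - 1) * v' * v₁) / 2)
      ≤ (1 + Real.exp ε₂) / (2 * Real.exp ε₁) ∧
    (1 + Real.exp ε₂) / (2 * Real.exp ε₁) ≤ Real.exp (ε₂ - ε₁) :=
  mR_case_flip_general ε₁ ε₂ hε₂ a b ha hb v₁ hv₁ v' hv'
end

section
/- Let ε₁, ε₂ ≥ 0 and let f denote the Laplace density with mean 0 and scale 2/ε₂. The mechanism M_L (with k = 2) on inputs (g, v), g ∈ {0,1}, v ∈ [-1,1], has output density Pr[(g',v') | (g,v)] = (e^{ε₁}/(e^{ε₁}+1))·f(v' - v) if g' = g, and (1/(e^{ε₁}+1))·f(v') if g' ≠ g. Then for any two inputs x₀, x₁ and any output y, the ratio of output densities is at most e^ε where ε = max{ε₂, ε₂/2 + ε₁}; i.e., M_L with k = 2 is max{ε₂, ε₂/2 + ε₁}-LDP. -/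
open Real

/-
In the mechanism the group label is released by randomized response and the value by the Laplace
mechanism, except that a flipped label releases pure noise centred at `0`. Shifting the centre of
a Laplace density of scale `b` by `d` changes it by a factor at most `e^{d/b}`, so the value part
costs `e^{2/b}` when both labels are kept and `e^{1/b}` when exactly one is (the centres are `v`
and `0`), on top of the randomized-response factor `e^{ε₁}`. With `b = 2/ε₂` these are `e^{ε₂}`
and `e^{ε₂/2 + ε₁}`.
-/

noncomputable def laplacePDF (b x : ℝ) : ℝ := 1 / (2 * b) * exp (-|x| / b)

lemma laplacePDF_nonneg {b : ℝ} (hb : 0 ≤ b) (x : ℝ) : 0 ≤ laplacePDF b x := by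
  unfold laplacePDF; positivity

lemma laplacePDF_le_exp_mul {b : ℝ} (hb : 0 ≤ b) (x y : ℝ) :
    laplacePDF b x ≤ exp (|x - y| / b) * laplacePDF b y := by
  have hexp : -|x| / b ≤ |x - y| / b + -|y| / b := by
    rw [← add_div]
    gcongr
    linarith [abs_sub_abs_le_abs_sub y x, abs_sub_comm x y]
  unfold laplacePDF
  rw [mul_left_comm, ← exp_add]
  gcongr

lemma laplacePDF_le_exp_mul_of_abs_sub_le {b d x y : ℝ} (hb : 0 ≤ b) (h : |x - y| ≤ d) :
    laplacePDF b x ≤ exp (d / b) * laplacePDF b y :=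
  (laplacePDF_le_exp_mul hb x y).trans <|
    mul_le_mul_of_nonneg_right (exp_le_exp.2 (div_le_div_of_nonneg_right h hb))
      (laplacePDF_nonneg hb y)

noncomputable def mLDensity (ε₁ b : ℝ) (g : Bool) (v : ℝ) (g' : Bool) (v' : ℝ) : ℝ :=
  if g' = g then exp ε₁ / (exp ε₁ + 1) * laplacePDF b (v' - v)
  else 1 / (exp ε₁ + 1) * laplacePDF b v'

lemma mLDensity_le_exp_mul {ε₁ b : ℝ} (hε₁ : 0 ≤ ε₁) (hb : 0 ≤ b) {g₀ g₁ : Bool} {v₀ v₁ : ℝ}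
    (hv₀ : |v₀| ≤ 1) (hv₁ : |v₁| ≤ 1) (g' : Bool) (v' : ℝ) :
    mLDensity ε₁ b g₀ v₀ g' v' ≤ exp (max (2 / b) (1 / b + ε₁)) * mLDensity ε₁ b g₁ v₁ g' v' := by
  set ε := max (2 / b) (1 / b + ε₁)
  have hkeep : exp ε₁ / (exp ε₁ + 1) = exp ε₁ * (1 / (exp ε₁ + 1)) := (mul_one_div _ _).symm
  have hflip_le_keep : 1 / (exp ε₁ + 1) ≤ exp ε₁ / (exp ε₁ + 1) := by
    gcongr; exact one_le_exp hε₁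
  have htwo_le : 2 / b ≤ ε := le_max_left _ _
  have hone_le : 1 / b ≤ ε := le_trans (by gcongr; norm_num) htwo_le
  have hpdf := laplacePDF_nonneg hb
  unfold mLDensity
  split_ifs
  · have hshift : |v' - v₀ - (v' - v₁)| ≤ 2 := by
      rw [sub_sub_sub_cancel_left, abs_sub_comm]
      exact (abs_sub _ _).trans (by linarith)
    calc exp ε₁ / (exp ε₁ + 1) * laplacePDF b (v' - v₀)
        ≤ exp ε₁ / (exp ε₁ + 1) * (exp (2 / b) * laplacePDF b (v' - v₁)) := by
          gcongr; exact laplacePDF_le_exp_mul_of_abs_sub_le hb hshift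
      _ ≤ exp ε₁ / (exp ε₁ + 1) * (exp ε * laplacePDF b (v' - v₁)) := by gcongr; exact hpdf _
      _ = _ := by ring
  · have hshift : |v' - v₀ - v'| ≤ 1 := by rwa [sub_sub_cancel_left, abs_neg]
    calc exp ε₁ / (exp ε₁ + 1) * laplacePDF b (v' - v₀)
        ≤ exp ε₁ * (1 / (exp ε₁ + 1)) * (exp (1 / b) * laplacePDF b v') := by
          rw [hkeep]; gcongr; exact laplacePDF_le_exp_mul_of_abs_sub_le hb hshift
      _ = exp (1 / b + ε₁) * (1 / (exp ε₁ + 1) * laplacePDF b v') := by rw [exp_add]; ring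
      _ ≤ _ := by gcongr; exacts [mul_nonneg (by positivity) (hpdf _), le_max_right _ _]
  · have hshift : |v' - (v' - v₁)| ≤ 1 := by rwa [sub_sub_cancel]
    calc 1 / (exp ε₁ + 1) * laplacePDF b v'
        ≤ exp ε₁ / (exp ε₁ + 1) * (exp (1 / b) * laplacePDF b (v' - v₁)) :=
          mul_le_mul hflip_le_keep (laplacePDF_le_exp_mul_of_abs_sub_le hb hshift) (hpdf _)
            (by positivity)
      _ ≤ exp ε₁ / (exp ε₁ + 1) * (exp ε * laplacePDF b (v' - v₁)) := by gcongr; exact hpdf _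
      _ = _ := by ring
  · have hε : 0 ≤ ε := le_trans (by positivity) hone_le
    exact le_mul_of_one_le_left (mul_nonneg (by positivity) (hpdf _)) (one_le_exp hε)

/-- The mechanism `M_L` with `k = 2` is `max{ε₂, ε₂/2 + ε₁}`-LDP. -/
theorem mL_ldp (ε₁ ε₂ : ℝ) (hε₁ : 0 ≤ ε₁) (hε₂ : 0 < ε₂)
    (f : ℝ → ℝ) (hf : ∀ x, f x = 1 / (2 * (2 / ε₂)) * Real.exp (-|x| / (2 / ε₂)))
    (dens : Bool → ℝ → Bool → ℝ → ℝ)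
    (hdens : ∀ g v g' v', dens g v g' v' =
      if g' = g then (Real.exp ε₁ / (Real.exp ε₁ + 1)) * f (v' - v)
      else (1 / (Real.exp ε₁ + 1)) * f v')
    (g₀ g₁ : Bool) (v₀ v₁ : ℝ)
    (hv₀ : v₀ ∈ Set.Icc (-1 : ℝ) 1) (hv₁ : v₁ ∈ Set.Icc (-1 : ℝ) 1)
    (g' : Bool) (v' : ℝ) :
    dens g₀ v₀ g' v' ≤ Real.exp (max ε₂ (ε₂ / 2 + ε₁)) * dens g₁ v₁ g' v' := by
  obtain rfl : f = laplacePDF (2 / ε₂) := funext hf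
  obtain rfl : dens = mLDensity ε₁ (2 / ε₂) := by
    ext g v g' v'; exact hdens g v g' v'
  have hscale : max (2 / (2 / ε₂)) (1 / (2 / ε₂) + ε₁) = max ε₂ (ε₂ / 2 + ε₁) := by
    rw [div_div_cancel₀ two_ne_zero, one_div_div]
  rw [← hscale]
  exact mLDensity_le_exp_mul hε₁ (by positivity) (abs_le.2 hv₀) (abs_le.2 hv₁) g' v'
end

section
/- Under the probabilistic model of the M_L estimator, with a = e^{ε₁}/(e^{ε₁}+1), Var[m̂_G^L] = (1/n)·(ν²·e^{-ε₁} + (1 + e^{-ε₁})·(σ_L² + ((K-n)/n)·σ̄_L²·e^{-ε₁})), where ν² = (1/n)Σᵢ vᵢ², σ_L² = 8/ε₂² is the variance of Laplace(0, 2/ε₂), and σ̄_L² = 2k²/ε₂² is the variance of Laplace(0, k/ε₂). -/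
open MeasureTheory ProbabilityTheory

/-- `iIndepFun` is stable under a.e. modification of each variable. -/
lemma iIndepFun_congr_ae {Ω : Type*} {_ : MeasurableSpace Ω} {μ : Measure Ω}
    {ι : Type*} {β : ι → Type*} [m : ∀ i, MeasurableSpace (β i)]
    {f g : ∀ i, Ω → β i} (hf : iIndepFun f μ) (h : ∀ i, f i =ᵐ[μ] g i) :
    iIndepFun g μ := by
  rw [iIndepFun_iff_measure_inter_preimage_eq_mul] at hf ⊢
  intro S sets H
  have hae : ∀ i, (f i ⁻¹' sets i : Set Ω) =ᵐ[μ] (g i ⁻¹' sets i : Set Ω) := fun i => by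
    filter_upwards [h i] with ω hω
    exact congrArg (· ∈ sets i) hω
  have h1 : (⋂ i ∈ S, g i ⁻¹' sets i) =ᵐ[μ] ⋂ i ∈ S, f i ⁻¹' sets i := by
    rw [Filter.eventuallyEq_set]
    have hball : ∀ᵐ ω ∂μ, ∀ i ∈ (↑S : Set ι), (ω ∈ f i ⁻¹' sets i ↔ ω ∈ g i ⁻¹' sets i) :=
      (MeasureTheory.ae_ball_iff S.countable_toSet).2 fun i _ => by
        filter_upwards [hae i] with ω hω
        exact Eq.to_iff hω
    filter_upwards [hball] with ω hω
    simp only [Set.mem_iInter]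
    exact ⟨fun hh i hi => (hω i (Finset.mem_coe.2 hi)).2 (hh i hi),
      fun hh i hi => (hω i (Finset.mem_coe.2 hi)).1 (hh i hi)⟩
  rw [measure_congr h1, hf S H]
  exact Finset.prod_congr rfl fun i _ => measure_congr (hae i)

/-- Closed-form variance of the `M_L` group-mean estimator:
`Var[m̂_G^L] = (1/n)(ν² e^{-ε₁} + (1+e^{-ε₁})(σ_L² + ((K-n)/n) σ̄_L² e^{-ε₁}))`,
where `σ_L² = 8/ε₂²` and `σ̄_L² = 2k²/ε₂²`. -/
theorem mL_estimator_variance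
    {Ω : Type*} [MeasureSpace Ω] [IsProbabilityMeasure (ℙ : Measure Ω)]
    (n K : ℕ) (hn : 1 ≤ n) (hK : n ≤ K)
    (ε₁ ε₂ kpar : ℝ) (hε₁ : 0 ≤ ε₁) (hε₂ : 0 < ε₂) (hkpar : 0 < kpar)
    (a : ℝ) (ha : a = Real.exp ε₁ / (Real.exp ε₁ + 1))
    (v : Fin n → ℝ) (hv : ∀ i, v i ∈ Set.Icc (-1 : ℝ) 1)
    (B Y : Fin n → Ω → ℝ) (Bb Yb : Fin (K - n) → Ω → ℝ)
    -- Bernoulli(a)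
    (hBval : ∀ i ω, B i ω = 0 ∨ B i ω = 1) (hBm : ∀ i, MemLp (B i) 2 ℙ)
    (hEB : ∀ i, ∫ ω, B i ω = a)
    -- Laplace(0, 2/ε₂): mean 0, variance 8/ε₂²
    (hYm : ∀ i, MemLp (Y i) 2 ℙ) (hEY : ∀ i, ∫ ω, Y i ω = 0)
    (hVarY : ∀ i, ∫ ω, (Y i ω) ^ 2 = 8 / ε₂ ^ 2)
    -- Bernoulli(1-a)
    (hBbval : ∀ j ω, Bb j ω = 0 ∨ Bb j ω = 1) (hBbm : ∀ j, MemLp (Bb j) 2 ℙ)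
    (hEBb : ∀ j, ∫ ω, Bb j ω = 1 - a)
    -- Laplace(0, k/ε₂): mean 0, variance 2k²/ε₂²
    (hYbm : ∀ j, MemLp (Yb j) 2 ℙ) (hEYb : ∀ j, ∫ ω, Yb j ω = 0)
    (hVarYb : ∀ j, ∫ ω, (Yb j ω) ^ 2 = 2 * kpar ^ 2 / ε₂ ^ 2)
    -- mutual independence of all the variables
    (hindep : iIndepFun
      (Sum.elim B (Sum.elim Y (Sum.elim Bb Yb)) :
        (Fin n ⊕ (Fin n ⊕ (Fin (K - n) ⊕ Fin (K - n)))) → Ω → ℝ) ℙ) :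
    variance (fun ω =>
        (1 / (a * n)) * (∑ i, B i ω * (v i + Y i ω) + ∑ j, Bb j ω * Yb j ω)) ℙ
      = (1 / n) * (((1 / n) * ∑ i, (v i) ^ 2) * Real.exp (-ε₁)
          + (1 + Real.exp (-ε₁)) * (8 / ε₂ ^ 2
              + (((K : ℝ) - n) / n) * (2 * kpar ^ 2 / ε₂ ^ 2) * Real.exp (-ε₁))) := by
  classical
  set σ2 : ℝ := 8 / ε₂ ^ 2 with hσ2
  set τ2 : ℝ := 2 * kpar ^ 2 / ε₂ ^ 2 with hτ2
  -- basic positivity facts about `a`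
  have hE1 : (0:ℝ) < Real.exp ε₁ := Real.exp_pos _
  have hapos : 0 < a := by
    rw [ha]; positivity
  have hane : a ≠ 0 := ne_of_gt hapos
  have hnne : (n : ℝ) ≠ 0 := by
    have : 0 < n := hn
    exact_mod_cast this.ne'
  -- the composite summands
  set X : Fin n → Ω → ℝ := fun i ω => B i ω * (v i + Y i ω) with hX
  set Z : Fin (K - n) → Ω → ℝ := fun j ω => Bb j ω * Yb j ω with hZ
  set W : (Fin n ⊕ Fin (K - n)) → Ω → ℝ := Sum.elim X Z with hW
  -- the base family
  set F : (Fin n ⊕ (Fin n ⊕ (Fin (K - n) ⊕ Fin (K - n)))) → Ω → ℝ :=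
    Sum.elim B (Sum.elim Y (Sum.elim Bb Yb)) with hF
  have hFm : ∀ p, AEStronglyMeasurable (F p) ℙ := by
    rintro (i | i | j | j)
    · exact (hBm i).aestronglyMeasurable
    · exact (hYm i).aestronglyMeasurable
    · exact (hBbm j).aestronglyMeasurable
    · exact (hYbm j).aestronglyMeasurable
  -- measurable modifications
  set G : (Fin n ⊕ (Fin n ⊕ (Fin (K - n) ⊕ Fin (K - n)))) → Ω → ℝ := fun p => (hFm p).mk _ with hG
  have hGmeas : ∀ p, Measurable (G p) := fun p => (hFm p).stronglyMeasurable_mk.measurable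
  have hFG : ∀ p, F p =ᵐ[ℙ] G p := fun p => (hFm p).ae_eq_mk
  have hGindep : iIndepFun G ℙ := iIndepFun_congr_ae hindep hFG
  -- MemLp of the composite summands
  have hXm : ∀ i, MemLp (X i) 2 ℙ := by
    intro i
    have h1 : MemLp (fun ω => v i + Y i ω) 2 ℙ := (memLp_const (v i)).add (hYm i)
    refine h1.of_le ?_ (Filter.Eventually.of_forall fun ω => ?_)
    · exact (hBm i).aestronglyMeasurable.mul
        (aestronglyMeasurable_const.add (hYm i).aestronglyMeasurable)
    · rcases hBval i ω with h | h <;>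
        simp [hX, h, Real.norm_eq_abs, abs_nonneg]
  have hZm : ∀ j, MemLp (Z j) 2 ℙ := by
    intro j
    refine (hYbm j).of_le ?_ (Filter.Eventually.of_forall fun ω => ?_)
    · exact (hBbm j).aestronglyMeasurable.mul (hYbm j).aestronglyMeasurable
    · rcases hBbval j ω with h | h <;>
        simp [hZ, h, Real.norm_eq_abs, abs_nonneg]
  have hWm : ∀ p, MemLp (W p) 2 ℙ := by
    rintro (i | j)
    · exact hXm i
    · exact hZm j
  -- pairwise independence of the composite summands
  have hφX : ∀ i : Fin n, Measurable (fun x : ℝ × ℝ => x.1 * (v i + x.2)) := by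
    intro i; fun_prop
  have hφZ : Measurable (fun x : ℝ × ℝ => x.1 * x.2) := by fun_prop
  -- index maps into the base family
  set ι1 : (Fin n ⊕ Fin (K - n)) → (Fin n ⊕ (Fin n ⊕ (Fin (K - n) ⊕ Fin (K - n)))) :=
    Sum.elim (fun i => .inl i) (fun j => .inr (.inr (.inl j))) with hι1
  set ι2 : (Fin n ⊕ Fin (K - n)) → (Fin n ⊕ (Fin n ⊕ (Fin (K - n) ⊕ Fin (K - n)))) :=
    Sum.elim (fun i => .inr (.inl i)) (fun j => .inr (.inr (.inr j))) with hι2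
  have hφ : ∀ p : Fin n ⊕ Fin (K - n), ∃ φ : ℝ × ℝ → ℝ, Measurable φ ∧
      ∀ b y : ℝ, φ (b, y) = (match p with
        | .inl i => b * (v i + y)
        | .inr _ => b * y) := by
    rintro (i | j)
    · exact ⟨fun x => x.1 * (v i + x.2), hφX i, fun _ _ => rfl⟩
    · exact ⟨fun x => x.1 * x.2, hφZ, fun _ _ => rfl⟩
  have hWae : ∀ p : Fin n ⊕ Fin (K - n),
      ∃ φ : ℝ × ℝ → ℝ, Measurable φ ∧
        (φ ∘ fun ω => (G (ι1 p) ω, G (ι2 p) ω)) =ᵐ[ℙ] W p := by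
    rintro (i | j)
    · refine ⟨fun x => x.1 * (v i + x.2), hφX i, ?_⟩
      filter_upwards [hFG (.inl i), hFG (.inr (.inl i))] with ω h1 h2
      simp only [Function.comp_apply, hW, hX, hι1, hι2, Sum.elim_inl, Sum.elim_inr]
      rw [← h1, ← h2]
      rfl
    · refine ⟨fun x => x.1 * x.2, hφZ, ?_⟩
      filter_upwards [hFG (.inr (.inr (.inl j))), hFG (.inr (.inr (.inr j)))] with ω h1 h2
      simp only [Function.comp_apply, hW, hZ, hι1, hι2, Sum.elim_inl, Sum.elim_inr]
      rw [← h1, ← h2]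
      rfl
  have hι : ∀ p q : Fin n ⊕ Fin (K - n), p ≠ q →
      ι1 p ≠ ι1 q ∧ ι1 p ≠ ι2 q ∧ ι2 p ≠ ι1 q ∧ ι2 p ≠ ι2 q := by
    rintro (i | j) (i' | j') hpq
    · have hii : i ≠ i' := by rintro rfl; exact hpq rfl
      exact ⟨by simp [hι1, hii], by simp [hι1, hι2], by simp [hι1, hι2], by simp [hι2, hii]⟩
    · exact ⟨by simp [hι1], by simp [hι1, hι2], by simp [hι1, hι2], by simp [hι2]⟩
    · exact ⟨by simp [hι1], by simp [hι1, hι2], by simp [hι1, hι2], by simp [hι2]⟩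
    · have hjj : j ≠ j' := by rintro rfl; exact hpq rfl
      exact ⟨by simp [hι1, hjj], by simp [hι1, hι2], by simp [hι1, hι2], by simp [hι2, hjj]⟩
  have hWindep : ∀ p q : Fin n ⊕ Fin (K - n), p ≠ q → IndepFun (W p) (W q) ℙ := by
    intro p q hpq
    obtain ⟨h11, h12, h21, h22⟩ := hι p q hpq
    obtain ⟨φ, hφm, hφae⟩ := hWae p
    obtain ⟨ψ, hψm, hψae⟩ := hWae q
    have hbase := hGindep.indepFun_prodMk_prodMk hGmeas (ι1 p) (ι2 p) (ι1 q) (ι2 q)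
      h11 h12 h21 h22
    exact (hbase.comp hφm hψm).congr hφae hψae
  -- independence facts inside a single summand
  have hBY : ∀ i : Fin n, IndepFun (B i) (Y i) ℙ := by
    intro i
    exact hindep.indepFun (i := .inl i) (j := .inr (.inl i)) (by simp)
  have hBbYb : ∀ j : Fin (K - n), IndepFun (Bb j) (Yb j) ℙ := by
    intro j
    exact hindep.indepFun (i := .inr (.inr (.inl j))) (j := .inr (.inr (.inr j))) (by simp)
  -- expectations of summands
  have hEX : ∀ i, ∫ ω, X i ω = a * v i := by
    intro i
    have hBint : Integrable (B i) ℙ := (hBm i).integrable one_le_two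
    have hYint : Integrable (Y i) ℙ := (hYm i).integrable one_le_two
    have hBYint : Integrable (fun ω => B i ω * Y i ω) ℙ :=
      (hBY i).integrable_mul hBint hYint
    have h1 : ∫ ω, X i ω = ∫ ω, (B i ω * v i + B i ω * Y i ω) := by
      congr 1; funext ω; simp only [hX]; ring
    rw [h1, integral_add (hBint.mul_const _) hBYint, integral_mul_const,
      (hBY i).integral_fun_mul_eq_mul_integral hBint.aestronglyMeasurable hYint.aestronglyMeasurable,
      hEB i, hEY i]
    ring
  have hEX2 : ∀ i, ∫ ω, (X i ω) ^ 2 = a * ((v i) ^ 2 + σ2) := by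
    intro i
    have hBint : Integrable (B i) ℙ := (hBm i).integrable one_le_two
    have hYint : Integrable (Y i) ℙ := (hYm i).integrable one_le_two
    have hsq : ∀ ω, (X i ω) ^ 2 = B i ω * (v i + Y i ω) ^ 2 := by
      intro ω
      rcases hBval i ω with h | h <;> simp [hX, h] <;> ring
    have hind : IndepFun (B i) (fun ω => (v i + Y i ω) ^ 2) ℙ := by
      have := (hBY i).comp (φ := id) (ψ := fun y : ℝ => (v i + y) ^ 2)
        measurable_id (by fun_prop)
      exact this
    have h1 : ∫ ω, (X i ω) ^ 2 = ∫ ω, B i ω * (v i + Y i ω) ^ 2 := by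
      congr 1; funext ω; exact hsq ω
    have hsqm : AEStronglyMeasurable (fun ω => (v i + Y i ω) ^ 2) ℙ := by
      exact ((aestronglyMeasurable_const.add (hYm i).aestronglyMeasurable).pow 2)
    have h2 : ∫ ω, (v i + Y i ω) ^ 2 = (v i) ^ 2 + σ2 := by
      have hexp : ∀ ω, (v i + Y i ω) ^ 2 = (v i) ^ 2 + (2 * v i) * Y i ω + Y i ω ^ 2 := by
        intro ω; ring
      have hYsq : Integrable (fun ω => Y i ω ^ 2) ℙ := (hYm i).integrable_sq
      have hci : Integrable (fun _ : Ω => (v i : ℝ) ^ 2) ℙ := integrable_const _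
      calc ∫ ω, (v i + Y i ω) ^ 2
          = ∫ ω, ((v i) ^ 2 + (2 * v i) * Y i ω + Y i ω ^ 2) := by
            congr 1; funext ω; exact hexp ω
        _ = (∫ ω, ((v i) ^ 2 + (2 * v i) * Y i ω)) + ∫ ω, Y i ω ^ 2 := by
            exact integral_add (hci.add (hYint.const_mul _)) hYsq
        _ = ((∫ ω, (v i : ℝ) ^ 2) + ∫ ω, (2 * v i) * Y i ω) + ∫ ω, Y i ω ^ 2 := by
            rw [integral_add hci (hYint.const_mul _)]
        _ = (v i) ^ 2 + σ2 := by
            rw [integral_const_mul, hEY i, hVarY i, integral_const]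
            simp [hσ2]
      -- done
    rw [h1, hind.integral_fun_mul_eq_mul_integral hBint.aestronglyMeasurable hsqm, hEB i, h2]
  have hEZ : ∀ j, ∫ ω, Z j ω = 0 := by
    intro j
    have hBint : Integrable (Bb j) ℙ := (hBbm j).integrable one_le_two
    have hYint : Integrable (Yb j) ℙ := (hYbm j).integrable one_le_two
    rw [show (fun ω => Z j ω) = fun ω => Bb j ω * Yb j ω from rfl,
      (hBbYb j).integral_fun_mul_eq_mul_integral hBint.aestronglyMeasurable hYint.aestronglyMeasurable,
      hEYb j, mul_zero]
  have hEZ2 : ∀ j, ∫ ω, (Z j ω) ^ 2 = (1 - a) * τ2 := by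
    intro j
    have hBint : Integrable (Bb j) ℙ := (hBbm j).integrable one_le_two
    have hsq : ∀ ω, (Z j ω) ^ 2 = Bb j ω * Yb j ω ^ 2 := by
      intro ω
      rcases hBbval j ω with h | h <;> simp [hZ, h] <;> ring
    have hind : IndepFun (Bb j) (fun ω => Yb j ω ^ 2) ℙ := by
      have := (hBbYb j).comp (φ := id) (ψ := fun y : ℝ => y ^ 2)
        measurable_id (by fun_prop)
      exact this
    have hsqm : AEStronglyMeasurable (fun ω => Yb j ω ^ 2) ℙ :=
      (hYbm j).aestronglyMeasurable.pow 2
    have h1 : ∫ ω, (Z j ω) ^ 2 = ∫ ω, Bb j ω * Yb j ω ^ 2 := by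
      congr 1; funext ω; exact hsq ω
    rw [h1, hind.integral_fun_mul_eq_mul_integral hBint.aestronglyMeasurable hsqm, hEBb j, hVarYb j]
  -- variances of summands
  have hvarX : ∀ i, variance (X i) ℙ = a * ((v i) ^ 2 + σ2) - (a * v i) ^ 2 := by
    intro i
    rw [variance_eq_sub (hXm i)]
    have h1 : (∫ ω, (X i ^ 2) ω) = ∫ ω, (X i ω) ^ 2 := rfl
    rw [h1, hEX2 i, hEX i]
  have hvarZ : ∀ j, variance (Z j) ℙ = (1 - a) * τ2 := by
    intro j
    rw [variance_eq_sub (hZm j)]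
    have h1 : (∫ ω, (Z j ^ 2) ω) = ∫ ω, (Z j ω) ^ 2 := rfl
    rw [h1, hEZ2 j, hEZ j]
    ring
  -- rewrite the estimator as a scaled sum
  have hfun : (fun ω =>
        (1 / (a * n)) * (∑ i, B i ω * (v i + Y i ω) + ∑ j, Bb j ω * Yb j ω))
      = (1 / (a * n)) • (∑ p : Fin n ⊕ Fin (K - n), W p) := by
    funext ω
    simp only [Pi.smul_apply, smul_eq_mul, Pi.add_apply, Finset.sum_apply,
      Fintype.sum_sum_type, hW, hX, hZ, Sum.elim_inl, Sum.elim_inr]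
  rw [hfun, variance_smul]
  have hsum : variance (∑ p : Fin n ⊕ Fin (K - n), W p) ℙ = ∑ p : Fin n ⊕ Fin (K - n), variance (W p) ℙ := by
    refine IndepFun.variance_sum (fun p _ => hWm p) ?_
    intro p _ q _ hpq
    exact hWindep p q hpq
  rw [hsum]
  have hsplit : ∑ p : Fin n ⊕ Fin (K - n), variance (W p) ℙ
      = ∑ i, variance (X i) ℙ + ∑ j, variance (Z j) ℙ := by
    rw [Fintype.sum_sum_type]
    rfl
  rw [hsplit]
  have hsumX : ∑ i, variance (X i) ℙ
      = (a - a ^ 2) * (∑ i, (v i) ^ 2) + n * (a * σ2) := by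
    calc ∑ i, variance (X i) ℙ
        = ∑ i, ((a - a ^ 2) * (v i) ^ 2 + a * σ2) := by
          refine Finset.sum_congr rfl fun i _ => ?_
          rw [hvarX i]; ring
      _ = (a - a ^ 2) * (∑ i, (v i) ^ 2) + n * (a * σ2) := by
          rw [Finset.sum_add_distrib, ← Finset.mul_sum, Finset.sum_const,
            Finset.card_univ, Fintype.card_fin, nsmul_eq_mul]
  have hsumZ : ∑ j, variance (Z j) ℙ = ((K : ℝ) - n) * ((1 - a) * τ2) := by
    have hcast : ((K - n : ℕ) : ℝ) = (K : ℝ) - n := Nat.cast_sub hK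
    calc ∑ j : Fin (K - n), variance (Z j) ℙ = ∑ _j : Fin (K - n), (1 - a) * τ2 :=
          Finset.sum_congr rfl fun j _ => hvarZ j
      _ = ((K : ℝ) - n) * ((1 - a) * τ2) := by
          rw [Finset.sum_const, Finset.card_univ, Fintype.card_fin, nsmul_eq_mul, hcast]
  rw [hsumX, hsumZ]
  -- final algebra
  subst ha
  set t : ℝ := Real.exp ε₁ with htdef
  have htne : t ≠ 0 := ne_of_gt hE1
  have ht1 : t + 1 ≠ 0 := by positivity
  have hneg : Real.exp (-ε₁) = t⁻¹ := by
    rw [Real.exp_neg, htdef]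
  rw [hneg]
  field_simp
  ring
end

section
/- Under the probabilistic model of the M_R estimator, with a = e^{ε₁}/(e^{ε₁}+1), b = e^{ε₂}/(e^{ε₂}+1), Var[m̂_G^R] = (1/(a(2b-1)²n))·(1 - a(2b-1)²ν² + ((K-n)/n)·(1-a)/a), where ν² = (1/n)Σᵢ vᵢ². -/
open MeasureTheory ProbabilityTheory
open Filter

lemma my_variance_congr {Ω : Type*} [MeasurableSpace Ω] {μ : Measure Ω} {X Y : Ω → ℝ}
    (h : X =ᵐ[μ] Y) : variance X μ = variance Y μ := by
  have hI : μ[X] = μ[Y] := integral_congr_ae h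
  unfold ProbabilityTheory.variance ProbabilityTheory.evariance
  rw [hI]
  congr 1
  exact lintegral_congr_ae (h.mono fun ω hω => by simp only [hω])

lemma my_iIndepFun_ae_eq {Ω ι : Type*} {β : ι → Type*} [MeasurableSpace Ω] {μ : Measure Ω}
    {m : ∀ i, MeasurableSpace (β i)} {f g : ∀ i, Ω → β i}
    (hf : iIndepFun f μ) (h : ∀ i, f i =ᵐ[μ] g i) : iIndepFun g μ := by
  rw [iIndepFun_iff_measure_inter_preimage_eq_mul] at hf ⊢
  intro S sets hsets
  have h1 : ∀ i, (g i ⁻¹' sets i : Set Ω) =ᵐ[μ] (f i ⁻¹' sets i : Set Ω) := fun i =>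
    eventuallyEq_set.2 ((h i).mono fun ω hω => by simp [Set.mem_preimage, hω])
  have h2 : (⋂ i ∈ S, g i ⁻¹' sets i : Set Ω) =ᵐ[μ] (⋂ i ∈ S, f i ⁻¹' sets i : Set Ω) := by
    refine eventuallyEq_set.2 ?_
    have hall : ∀ᵐ ω ∂μ, ∀ i ∈ S, g i ω = f i ω := by
      rw [eventually_all_finset]
      exact fun i _ => (h i).symm
    refine hall.mono fun ω hω => ?_
    simp only [Set.mem_iInter, Set.mem_preimage]
    constructor <;> intro hmem i hi
    · rw [← hω i hi]; exact hmem i hi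
    · rw [hω i hi]; exact hmem i hi
  rw [measure_congr h2, hf S hsets]
  exact Finset.prod_congr rfl fun i _ => measure_congr (h1 i).symm


/-- Closed-form variance of the `M_R` group-mean estimator:
`Var[m̂_G^R] = (1/(a(2b-1)²n))(1 - a(2b-1)²ν² + ((K-n)/n)(1-a)/a)`. -/
theorem mR_estimator_variance
    {Ω : Type*} [MeasureSpace Ω] [IsProbabilityMeasure (ℙ : Measure Ω)]
    (n K : ℕ) (hn : 1 ≤ n) (hK : n ≤ K)
    (ε₁ ε₂ : ℝ) (hε₁ : 0 ≤ ε₁) (hε₂ : 0 ≤ ε₂)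
    (a b : ℝ) (ha : a = Real.exp ε₁ / (Real.exp ε₁ + 1))
    (hb : b = Real.exp ε₂ / (Real.exp ε₂ + 1))
    (v : Fin n → ℝ) (hv : ∀ i, v i ∈ Set.Icc (-1 : ℝ) 1)
    (B V' : Fin n → Ω → ℝ) (Bb Vb' : Fin (K - n) → Ω → ℝ)
    -- Bernoulli(a)
    (hBval : ∀ i ω, B i ω = 0 ∨ B i ω = 1) (hBm : ∀ i, MemLp (B i) 2 ℙ)
    (hEB : ∀ i, ∫ ω, B i ω = a)
    -- perturbed discretized value: ±1-valued with mean (2b-1)vᵢ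
    (hV'val : ∀ i ω, V' i ω = -1 ∨ V' i ω = 1) (hV'm : ∀ i, MemLp (V' i) 2 ℙ)
    (hEV' : ∀ i, ∫ ω, V' i ω = (2 * b - 1) * v i)
    -- Bernoulli(1-a)
    (hBbval : ∀ j ω, Bb j ω = 0 ∨ Bb j ω = 1) (hBbm : ∀ j, MemLp (Bb j) 2 ℙ)
    (hEBb : ∀ j, ∫ ω, Bb j ω = 1 - a)
    -- perturbed value of group-flipped clients: uniform on {±1}
    (hVb'val : ∀ j ω, Vb' j ω = -1 ∨ Vb' j ω = 1) (hVb'm : ∀ j, MemLp (Vb' j) 2 ℙ)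
    (hEVb' : ∀ j, ∫ ω, Vb' j ω = 0)
    -- mutual independence of all the variables
    (hindep : iIndepFun
      (Sum.elim B (Sum.elim V' (Sum.elim Bb Vb')) :
        (Fin n ⊕ (Fin n ⊕ (Fin (K - n) ⊕ Fin (K - n)))) → Ω → ℝ) ℙ) :
    variance (fun ω =>
        (1 / (a * (2 * b - 1) * n)) * (∑ i, B i ω * V' i ω + ∑ j, Bb j ω * Vb' j ω)) ℙ
      = (1 / (a * (2 * b - 1) ^ 2 * n))
          * (1 - a * (2 * b - 1) ^ 2 * ((1 / n) * ∑ i, (v i) ^ 2)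
              + (((K : ℝ) - n) / n) * (1 - a) / a) := by
  classical
  set F : (Fin n ⊕ (Fin n ⊕ (Fin (K - n) ⊕ Fin (K - n)))) → Ω → ℝ :=
    Sum.elim B (Sum.elim V' (Sum.elim Bb Vb')) with hF
  have hFm : ∀ k, MemLp (F k) 2 ℙ := by
    rintro (i | i | j | j)
    exacts [hBm i, hV'm i, hBbm j, hVb'm j]
  set G : (Fin n ⊕ (Fin n ⊕ (Fin (K - n) ⊕ Fin (K - n)))) → Ω → ℝ := fun k => ((hFm k).1).mk (F k) with hG
  have hGmeas : ∀ k, Measurable (G k) := fun k => ((hFm k).1).measurable_mk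
  have hGae : ∀ k, F k =ᵐ[ℙ] G k := fun k => ((hFm k).1).ae_eq_mk
  have hGindep : iIndepFun G ℙ := my_iIndepFun_ae_eq hindep hGae
  -- a.e. value facts
  have hGB : ∀ i : Fin n, ∀ᵐ ω ∂ℙ, G (.inl i) ω = 0 ∨ G (.inl i) ω = 1 :=
    fun i => (hGae (.inl i)).mono fun ω hω => by rw [← hω]; exact hBval i ω
  have hGV : ∀ i : Fin n, ∀ᵐ ω ∂ℙ, G (.inr (.inl i)) ω = -1 ∨ G (.inr (.inl i)) ω = 1 :=
    fun i => (hGae (.inr (.inl i))).mono fun ω hω => by rw [← hω]; exact hV'val i ω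
  have hGBb : ∀ j, ∀ᵐ ω ∂ℙ, G (.inr (.inr (.inl j))) ω = 0 ∨ G (.inr (.inr (.inl j))) ω = 1 :=
    fun j => (hGae (.inr (.inr (.inl j)))).mono fun ω hω => by rw [← hω]; exact hBbval j ω
  have hGVb : ∀ j, ∀ᵐ ω ∂ℙ, G (.inr (.inr (.inr j))) ω = -1 ∨ G (.inr (.inr (.inr j))) ω = 1 :=
    fun j => (hGae (.inr (.inr (.inr j)))).mono fun ω hω => by rw [← hω]; exact hVb'val j ω
  -- integrals
  have hIGB : ∀ i : Fin n, ∫ ω, G (.inl i) ω = a :=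
    fun i => by rw [← integral_congr_ae (hGae (.inl i))]; exact hEB i
  have hIGV : ∀ i : Fin n, ∫ ω, G (.inr (.inl i)) ω = (2 * b - 1) * v i :=
    fun i => by rw [← integral_congr_ae (hGae (.inr (.inl i)))]; exact hEV' i
  have hIGBb : ∀ j, ∫ ω, G (.inr (.inr (.inl j))) ω = 1 - a :=
    fun j => by rw [← integral_congr_ae (hGae (.inr (.inr (.inl j))))]; exact hEBb j
  have hIGVb : ∀ j, ∫ ω, G (.inr (.inr (.inr j))) ω = 0 :=
    fun j => by rw [← integral_congr_ae (hGae (.inr (.inr (.inr j))))]; exact hEVb' j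
  -- the products
  set X : (Fin n ⊕ Fin (K - n)) → Ω → ℝ :=
    Sum.elim (fun i => G (.inl i) * G (.inr (.inl i)))
      (fun j => G (.inr (.inr (.inl j))) * G (.inr (.inr (.inr j)))) with hX
  have hXsq : ∀ p, (X p ^ 2 : Ω → ℝ) =ᵐ[ℙ]
      Sum.elim (fun i => G (.inl i)) (fun j => G (.inr (.inr (.inl j)))) p := by
    rintro (i | j)
    · filter_upwards [hGB i, hGV i] with ω h1 h2
      simp only [hX, Sum.elim_inl, Pi.mul_apply, Pi.pow_apply]
      rcases h1 with h1 | h1 <;> rcases h2 with h2 | h2 <;> rw [h1, h2] <;> ring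
    · filter_upwards [hGBb j, hGVb j] with ω h1 h2
      simp only [hX, Sum.elim_inr, Pi.mul_apply, Pi.pow_apply]
      rcases h1 with h1 | h1 <;> rcases h2 with h2 | h2 <;> rw [h1, h2] <;> ring
  have hXbdd : ∀ p, ∀ᵐ ω ∂ℙ, ‖X p ω‖ ≤ 1 := by
    rintro (i | j)
    · filter_upwards [hGB i, hGV i] with ω h1 h2
      simp only [hX, Sum.elim_inl, Pi.mul_apply]
      rcases h1 with h1 | h1 <;> rcases h2 with h2 | h2 <;> rw [h1, h2] <;> norm_num
    · filter_upwards [hGBb j, hGVb j] with ω h1 h2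
      simp only [hX, Sum.elim_inr, Pi.mul_apply]
      rcases h1 with h1 | h1 <;> rcases h2 with h2 | h2 <;> rw [h1, h2] <;> norm_num
  have hXmeas : ∀ p, Measurable (X p) := by
    rintro (i | j)
    · exact (hGmeas _).mul (hGmeas _)
    · exact (hGmeas _).mul (hGmeas _)
  have hXm : ∀ p, MemLp (X p) 2 ℙ := fun p =>
    MemLp.of_bound (hXmeas p).aestronglyMeasurable 1 (hXbdd p)
  -- pairwise independence of the products
  have hXpair : ∀ p q : Fin n ⊕ Fin (K - n), p ≠ q → IndepFun (X p) (X q) ℙ := by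
    rintro (i | j) (i' | j') hpq
    · exact hGindep.indepFun_mul_mul hGmeas _ _ _ _ (by simpa using hpq) (by simp)
        (by simp) (by simpa using hpq)
    · exact hGindep.indepFun_mul_mul hGmeas _ _ _ _ (by simp) (by simp) (by simp) (by simp)
    · exact hGindep.indepFun_mul_mul hGmeas _ _ _ _ (by simp) (by simp) (by simp) (by simp)
    · exact hGindep.indepFun_mul_mul hGmeas _ _ _ _ (by simpa using hpq) (by simp)
        (by simp) (by simpa using hpq)
  -- second moments
  have hXsqI : ∀ p, (ℙ : Measure Ω)[(X p) ^ 2] =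
      Sum.elim (fun i : Fin n => a) (fun j : Fin (K - n) => 1 - a) p := by
    rintro (i | j)
    · calc (ℙ : Measure Ω)[(X (.inl i)) ^ 2]
          = ∫ ω, G (.inl i) ω := by exact integral_congr_ae (hXsq (.inl i))
        _ = a := hIGB i
    · calc (ℙ : Measure Ω)[(X (.inr j)) ^ 2]
          = ∫ ω, G (.inr (.inr (.inl j))) ω := by exact integral_congr_ae (hXsq (.inr j))
        _ = 1 - a := hIGBb j
  -- first moments
  have hXI : ∀ p, (ℙ : Measure Ω)[X p] =
      Sum.elim (fun i : Fin n => a * ((2 * b - 1) * v i)) (fun _ : Fin (K - n) => 0) p := by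
    rintro (i | j)
    · have hind : IndepFun (G (.inl i)) (G (.inr (.inl i))) ℙ :=
        hGindep.indepFun (by simp)
      calc (ℙ : Measure Ω)[X (.inl i)]
          = (∫ ω, G (.inl i) ω) * ∫ ω, G (.inr (.inl i)) ω :=
            hind.integral_mul_eq_mul_integral (hGmeas _).aestronglyMeasurable (hGmeas _).aestronglyMeasurable
        _ = a * ((2 * b - 1) * v i) := by rw [hIGB i, hIGV i]
    · have hind : IndepFun (G (.inr (.inr (.inl j)))) (G (.inr (.inr (.inr j)))) ℙ :=
        hGindep.indepFun (by simp)
      calc (ℙ : Measure Ω)[X (.inr j)]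
          = (∫ ω, G (.inr (.inr (.inl j))) ω) * ∫ ω, G (.inr (.inr (.inr j))) ω :=
            hind.integral_mul_eq_mul_integral (hGmeas _).aestronglyMeasurable (hGmeas _).aestronglyMeasurable
        _ = 0 := by rw [hIGBb j, hIGVb j]; ring
  -- variance of each product
  have hvarX : ∀ p, variance (X p) ℙ =
      Sum.elim (fun i : Fin n => a - a ^ 2 * (2 * b - 1) ^ 2 * (v i) ^ 2)
        (fun _ : Fin (K - n) => 1 - a) p := by
    rintro (i | j)
    · rw [variance_eq_sub (hXm _), hXsqI, hXI]; simp; ring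
    · rw [variance_eq_sub (hXm _), hXsqI, hXI]; simp
  -- variance of the sum
  have hvarsum : variance (∑ p, X p) ℙ =
      (∑ i : Fin n, (a - a ^ 2 * (2 * b - 1) ^ 2 * (v i) ^ 2)) + (K - n : ℕ) * (1 - a) := by
    rw [IndepFun.variance_sum (fun p _ => hXm p)
      (fun p _ q _ hpq => hXpair p q hpq)]
    rw [Fintype.sum_sum_type]
    simp only [hvarX, Sum.elim_inl, Sum.elim_inr, Finset.sum_const, Finset.card_univ,
      Fintype.card_fin, nsmul_eq_mul]
  -- rewrite the target function
  have haeq : (fun ω =>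
        (1 / (a * (2 * b - 1) * n)) * (∑ i, B i ω * V' i ω + ∑ j, Bb j ω * Vb' j ω))
      =ᵐ[ℙ] (fun ω => (1 / (a * (2 * b - 1) * n)) * (∑ p, X p) ω) := by
    have hall : ∀ᵐ ω ∂ℙ, ∀ k, F k ω = G k ω := ae_all_iff.2 fun k => hGae k
    filter_upwards [hall] with ω hω
    congr 1
    rw [Finset.sum_apply, Fintype.sum_sum_type]
    congr 1
    · refine Finset.sum_congr rfl fun i _ => ?_
      have h1 := hω (.inl i); have h2 := hω (.inr (.inl i))
      simp only [hF, Sum.elim_inl, Sum.elim_inr] at h1 h2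
      simp [hX, h1, h2]
    · refine Finset.sum_congr rfl fun j _ => ?_
      have h1 := hω (.inr (.inr (.inl j))); have h2 := hω (.inr (.inr (.inr j)))
      simp only [hF, Sum.elim_inl, Sum.elim_inr] at h1 h2
      simp [hX, h1, h2]
  rw [my_variance_congr haeq, variance_const_mul, hvarsum]
  -- final algebra
  have ha' : 0 < a := by
    rw [ha]; positivity
  have hn' : (0 : ℝ) < n := by exact_mod_cast hn
  have hKn : ((K - n : ℕ) : ℝ) = (K : ℝ) - n := by
    rw [Nat.cast_sub hK]
  rw [hKn]
  rw [Finset.sum_sub_distrib, Finset.sum_const, Finset.card_univ, Fintype.card_fin,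
    nsmul_eq_mul, ← Finset.mul_sum]
  by_cases hw : (2 * b - 1) = 0
  · rw [hw]; norm_num
  · field_simp
end
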